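/- arXiv:1912.04816 — 9 statements merged into one kernel-verified Lean document; each statement's English description precedes it below -/
import Mathlib

section
/- Termination soundness of Sieve: let G be a finite directed graph with edge labels Dec, Inc : E → Finset Var. If the Sieve procedure (iteratively removing, within some strongly connected component, all Dec(X)-edges for a variable X that is decremented but not incremented within that component) reduces G to an acyclic graph, then every cycle of the original graph G contains an edge decrementing some variable X such that no edge of that cycle increments X. -/
/-- One-step reachability along the edges of the subgraph `H`. -/
def sieveReach {V ι : Type*} (src tgt : ι → V) (H : Finset ι) : V → V → Prop :=
  Relation.ReflTransGen (fun a b => ∃ e ∈ H, src e = a ∧ tgt e = b)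

/-- Edge `e` lies inside a strongly connected component of the subgraph `H`:
it belongs to `H` and its endpoints are mutually reachable in `H`. -/
def sieveInside {V ι : Type*} (src tgt : ι → V) (H : Finset ι) (e : ι) : Prop :=
  e ∈ H ∧ sieveReach src tgt H (tgt e) (src e)

/-- Edges `e` and `e'` lie inside the same strongly connected component of `H`. -/
def sieveSameC {V ι : Type*} (src tgt : ι → V) (H : Finset ι) (e e' : ι) : Prop :=
  sieveInside src tgt H e ∧ sieveInside src tgt H e' ∧
    sieveReach src tgt H (src e) (src e') ∧ sieveReach src tgt H (src e') (src e)

/-- One iteration of the Sieve procedure: pick an SCC `C` (the component of an edge `e₀`)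
and a variable `X` decremented by some edge inside `C` and incremented by no edge inside
`C`; remove all edges inside `C` that decrement `X`. -/
def sieveStep {V ι Var : Type*} (src tgt : ι → V) (Dec Inc : ι → Finset Var)
    (H H' : Finset ι) : Prop :=
  ∃ (X : Var) (e₀ : ι), sieveInside src tgt H e₀ ∧ X ∈ Dec e₀ ∧
    (∀ e, sieveSameC src tgt H e₀ e → X ∉ Inc e) ∧
    (∀ e, e ∈ H' ↔ e ∈ H ∧ ¬ (sieveSameC src tgt H e₀ e ∧ X ∈ Dec e))

section Aux

variable {V ι : Type*} (src tgt : ι → V) (H : Finset ι) {k : ℕ} {c : ℕ → ι}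

lemma sieve_reach_chain (hmem : ∀ j, c j ∈ H) (hcyc : ∀ i, tgt (c i) = src (c (i + 1)))
    (a m : ℕ) : sieveReach src tgt H (src (c a)) (src (c (a + m))) := by
  induction m with
  | zero => exact Relation.ReflTransGen.refl
  | succ m ih => exact ih.tail ⟨c (a + m), hmem _, rfl, hcyc _⟩

lemma sieve_period (hper : ∀ i, c (i + k) = c i) : ∀ t i, c (i + k * t) = c i := by
  intro t
  induction t with
  | zero => simp
  | succ t ih =>
      intro i
      have : i + k * (t + 1) = (i + k * t) + k := by ring
      rw [this, hper, ih]

lemma sieve_reach_any (hk : 0 < k) (hper : ∀ i, c (i + k) = c i)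
    (hmem : ∀ j, c j ∈ H) (hcyc : ∀ i, tgt (c i) = src (c (i + 1)))
    (a b : ℕ) : sieveReach src tgt H (src (c a)) (src (c b)) := by
  have h1 : a ≤ k * (a + 1) := le_trans (by omega) (Nat.le_mul_of_pos_left _ hk)
  have h2 : a + (b + k * (a + 1) - a) = b + k * (a + 1) := by omega
  have h3 : c (b + k * (a + 1)) = c b := sieve_period hper _ _
  have := sieve_reach_chain src tgt H hmem hcyc a (b + k * (a + 1) - a)
  rwa [h2, h3] at this

lemma sieve_inside_cycle (hk : 0 < k) (hper : ∀ i, c (i + k) = c i)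
    (hmem : ∀ j, c j ∈ H) (hcyc : ∀ i, tgt (c i) = src (c (i + 1)))
    (i : ℕ) : sieveInside src tgt H (c i) := by
  refine ⟨hmem i, ?_⟩
  rw [hcyc i]
  exact sieve_reach_any src tgt H hk hper hmem hcyc (i + 1) i

lemma sieve_sameC_cycle (hk : 0 < k) (hper : ∀ i, c (i + k) = c i)
    (hmem : ∀ j, c j ∈ H) (hcyc : ∀ i, tgt (c i) = src (c (i + 1)))
    (a b : ℕ) : sieveSameC src tgt H (c a) (c b) :=
  ⟨sieve_inside_cycle src tgt H hk hper hmem hcyc a,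
   sieve_inside_cycle src tgt H hk hper hmem hcyc b,
   sieve_reach_any src tgt H hk hper hmem hcyc a b,
   sieve_reach_any src tgt H hk hper hmem hcyc b a⟩

end Aux

/-- Termination soundness of Sieve. If a run of the Sieve procedure,
starting from the full edge set, reduces the graph to an acyclic one (no edge lies
inside an SCC), then every cycle of the original graph contains an edge decrementing
some variable `X` such that no edge of the cycle increments `X`. Cycles are encoded
as `k`-periodic edge sequences with matching endpoints. -/
theorem stmt7 {V ι Var : Type*} [Fintype V] [Fintype ι] [Fintype Var]
    (src tgt : ι → V) (Dec Inc : ι → Finset Var)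
    (n : ℕ) (H : ℕ → Finset ι) (h0 : H 0 = Finset.univ)
    (hstep : ∀ i < n, sieveStep src tgt Dec Inc (H i) (H (i + 1)))
    (hacyc : ∀ e : ι, ¬ sieveInside src tgt (H n) e)
    (k : ℕ) (hk : 0 < k) (c : ℕ → ι)
    (hper : ∀ i, c (i + k) = c i)
    (hcyc : ∀ i, tgt (c i) = src (c (i + 1))) :
    ∃ X : Var, (∃ i, X ∈ Dec (c i)) ∧ ∀ j, X ∉ Inc (c j) := by
  classical
  have key : ∀ m, (∀ j, c j ∈ H m) ∨
      ∃ i < m, (∀ j, c j ∈ H i) ∧ ¬(∀ j, c j ∈ H (i + 1)) := by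
    intro m
    induction m with
    | zero => exact Or.inl (fun j => h0 ▸ Finset.mem_univ _)
    | succ m ih =>
        rcases ih with hall | ⟨i, hi, h1, h2⟩
        · by_cases hnext : ∀ j, c j ∈ H (m + 1)
          · exact Or.inl hnext
          · exact Or.inr ⟨m, Nat.lt_succ_self m, hall, hnext⟩
        · exact Or.inr ⟨i, hi.trans (Nat.lt_succ_self m), h1, h2⟩
  rcases key n with hall | ⟨i, hi, hmem, hnot⟩
  · exact absurd (sieve_inside_cycle src tgt (H n) hk hper hall hcyc 0) (hacyc _)
  · obtain ⟨X, e₀, hins, hXdec, hnoinc, hspec⟩ := hstep i hi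
    push_neg at hnot
    obtain ⟨j, hj⟩ := hnot
    have hrem : sieveSameC src tgt (H i) e₀ (c j) ∧ X ∈ Dec (c j) := by
      by_contra hcon
      exact hj ((hspec (c j)).mpr ⟨hmem j, hcon⟩)
    refine ⟨X, ⟨j, hrem.2⟩, fun j' => ?_⟩
    apply hnoinc
    have hcc := sieve_sameC_cycle src tgt (H i) hk hper hmem hcyc j j'
    exact ⟨hins, hcc.2.1, hrem.1.2.2.1.trans hcc.2.2.1, hcc.2.2.2.trans hrem.1.2.2.2⟩
end

section
/- Termination completeness of Sieve: let G be a finite directed graph with edge labels Dec, Inc : E → Finset Var. If every cycle of G contains an edge decrementing a variable X such that no edge of that cycle increments X, then the Sieve procedure, run to completion, reduces G to an acyclic graph. -/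
section Walks

variable {V ι Var : Type*}

def CycleHypothesis (src tgt : ι → V) (Dec Inc : ι → Finset Var) : Prop :=
  ∀ (k : ℕ), 0 < k → ∀ c : ℕ → ι, (∀ i, c (i + k) = c i) →
    (∀ i, tgt (c i) = src (c (i + 1))) →
    ∃ X : Var, (∃ i, X ∈ Dec (c i)) ∧ ∀ j, X ∉ Inc (c j)

def IsWalk (src tgt : ι → V) : V → V → List ι → Prop
  | u, v, [] => u = v
  | u, v, e :: l => src e = u ∧ IsWalk src tgt (tgt e) v l

variable {src tgt : ι → V} {H : Finset ι} {u v w : V} {l l' : List ι}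

lemma IsWalk.append (h : IsWalk src tgt u v l) (h' : IsWalk src tgt v w l') :
    IsWalk src tgt u w (l ++ l') := by
  induction l generalizing u with
  | nil => exact (h : u = v) ▸ h'
  | cons e l ih => exact ⟨h.1, ih h.2⟩

lemma IsWalk.src_getElem_zero (hw : IsWalk src tgt u v l) (hl : 0 < l.length) :
    src l[0] = u := by
  cases l with
  | nil => simp at hl
  | cons e l => exact hw.1

lemma IsWalk.tgt_getElem (hw : IsWalk src tgt u v l) (i : ℕ) (hi : i < l.length) :
    tgt l[i] = if h : i + 1 < l.length then src l[i + 1] else v := by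
  induction l generalizing u i with
  | nil => simp at hi
  | cons e l ih =>
    cases i with
    | zero =>
      cases l with
      | nil =>
        have hlast : tgt e = v := hw.2
        simpa using hlast
      | cons f l => simpa using hw.2.1.symm
    | succ i => simpa using ih hw.2 i (by simpa using hi)

lemma sieveReach_of_isWalk (hH : ∀ e ∈ l, e ∈ H) (hw : IsWalk src tgt u v l) :
    sieveReach src tgt H u v := by
  induction l generalizing u with
  | nil => exact (hw : u = v) ▸ .refl
  | cons e l ih =>
    exact .head ⟨e, hH e (by simp), hw.1, rfl⟩ (ih (fun f hf => hH f (by simp [hf])) hw.2)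

lemma exists_isWalk_of_sieveReach (h : sieveReach src tgt H u v) :
    ∃ l : List ι, (∀ e ∈ l, e ∈ H) ∧ IsWalk src tgt u v l := by
  induction h using Relation.ReflTransGen.head_induction_on with
  | refl => exact ⟨[], by simp, rfl⟩
  | head hab _ ih =>
    obtain ⟨e, heH, rfl, rfl⟩ := hab
    obtain ⟨l, hlH, hl⟩ := ih
    exact ⟨e :: l, by simpa [heH] using hlH, rfl, hl⟩

lemma sieveReach_of_mem_isWalk (hH : ∀ e ∈ l, e ∈ H) (hw : IsWalk src tgt u v l)
    {e : ι} (he : e ∈ l) :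
    sieveReach src tgt H u (src e) ∧ sieveReach src tgt H (tgt e) v := by
  induction l generalizing u with
  | nil => simp at he
  | cons f l ih =>
    have hHl : ∀ g ∈ l, g ∈ H := fun g hg => hH g (by simp [hg])
    have hf : sieveReach src tgt H u (tgt f) := .single ⟨f, hH f (by simp), hw.1, rfl⟩
    rcases List.mem_cons.mp he with rfl | he
    · exact ⟨hw.1 ▸ .refl, sieveReach_of_isWalk hHl hw.2⟩
    · obtain ⟨h₁, h₂⟩ := ih hHl hw.2 he
      exact ⟨hf.trans h₁, h₂⟩

-- Run around the walk forever.
lemma CycleHypothesis.exists_var_of_closed_isWalk {Dec Inc : ι → Finset Var}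
    (hgood : CycleHypothesis src tgt Dec Inc)
    (hw : IsWalk src tgt u u l) (hl : l ≠ []) :
    ∃ X : Var, (∃ e ∈ l, X ∈ Dec e) ∧ ∀ e ∈ l, X ∉ Inc e := by
  have hk : 0 < l.length := List.length_pos_iff.mpr hl
  set c : ℕ → ι := fun i => l[i % l.length]'(Nat.mod_lt i hk)
  have hper : ∀ i, c (i + l.length) = c i := by simp [c]
  have hadj : ∀ i, tgt (c i) = src (c (i + 1)) := by
    intro i
    have hsucc : (i + 1) % l.length = (i % l.length + 1) % l.length :=
      (Nat.mod_add_mod i _ 1).symm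
    simp only [c, hw.tgt_getElem _ (Nat.mod_lt i hk), hsucc]
    split_ifs with h
    · simp only [Nat.mod_eq_of_lt h]
    · simp only [show i % l.length + 1 = l.length by have := Nat.mod_lt i hk; omega, Nat.mod_self,
        hw.src_getElem_zero hk]
  obtain ⟨X, ⟨i, hi⟩, hX⟩ := hgood l.length hk c hper hadj
  refine ⟨X, ⟨c i, List.getElem_mem _, hi⟩, fun e he => ?_⟩
  obtain ⟨j, hj, rfl⟩ := List.getElem_of_mem he
  simpa [c, Nat.mod_eq_of_lt hj] using hX j

end Walks

section Components

variable {V ι : Type*} {src tgt : ι → V} {H : Finset ι}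

lemma sieveSameC_refl {e : ι} (he : sieveInside src tgt H e) : sieveSameC src tgt H e e :=
  ⟨he, he, .refl, .refl⟩

lemma sieveSameC.trans {e e' e'' : ι} (h : sieveSameC src tgt H e e')
    (h' : sieveSameC src tgt H e' e'') : sieveSameC src tgt H e e'' :=
  ⟨h.1, h'.2.1, h.2.2.1.trans h'.2.2.1, h'.2.2.2.trans h.2.2.2⟩

lemma sieveSameC_of_mem_closed_isWalk {e₀ : ι} (he₀ : sieveInside src tgt H e₀) {W : List ι}
    (hWH : ∀ e ∈ W, e ∈ H) (hW : IsWalk src tgt (src e₀) (src e₀) W) {e : ι} (he : e ∈ W) :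
    sieveSameC src tgt H e₀ e := by
  obtain ⟨hto, hfrom⟩ := sieveReach_of_mem_isWalk hWH hW he
  have heH := hWH e he
  exact ⟨he₀, ⟨heH, hfrom.trans hto⟩, hto, Relation.ReflTransGen.head ⟨e, heH, rfl, rfl⟩ hfrom⟩

-- For each edge of `S`, append a round trip from `src e₀` through it.
lemma exists_closed_isWalk_covering {e₀ : ι} (S : Finset ι)
    (hS : ∀ e ∈ S, sieveSameC src tgt H e₀ e) :
    ∃ W : List ι, (∀ e ∈ W, e ∈ H) ∧ IsWalk src tgt (src e₀) (src e₀) W ∧ ∀ e ∈ S, e ∈ W := by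
  classical
  induction S using Finset.induction_on with
  | empty => exact ⟨[], by simp, rfl, by simp⟩
  | insert f S _ ih =>
    obtain ⟨W, hWH, hW, hSW⟩ := ih fun e he => hS e (Finset.mem_insert_of_mem he)
    obtain ⟨-, ⟨hfH, hf⟩, hto, hfrom⟩ := hS f (Finset.mem_insert_self f S)
    obtain ⟨l₁, hl₁H, hl₁⟩ := exists_isWalk_of_sieveReach hto
    obtain ⟨l₂, hl₂H, hl₂⟩ := exists_isWalk_of_sieveReach (hf.trans hfrom)
    refine ⟨l₁ ++ f :: (l₂ ++ W), ?_, hl₁.append ⟨rfl, hl₂.append hW⟩, ?_⟩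
    · intro e he
      simp only [List.mem_append, List.mem_cons] at he
      rcases he with he | rfl | he | he
      exacts [hl₁H e he, hfH, hl₂H e he, hWH e he]
    · intro e he
      rcases Finset.mem_insert.mp he with rfl | he
      · simp
      · simp [hSW e he]

theorem CycleHypothesis.exists_sieveStep [Fintype ι] {Var : Type*} {Dec Inc : ι → Finset Var}
    (hgood : CycleHypothesis src tgt Dec Inc)
    {e₀ : ι} (he₀ : sieveInside src tgt H e₀) :
    ∃ H' : Finset ι, sieveStep src tgt Dec Inc H H' := by
  classical
  obtain ⟨W, hWH, hW, hcover⟩ :=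
    exists_closed_isWalk_covering (Finset.univ.filter (sieveSameC src tgt H e₀))
      fun _ he => (Finset.mem_filter.mp he).2
  have hsame : ∀ e ∈ W, sieveSameC src tgt H e₀ e := fun _ he =>
    sieveSameC_of_mem_closed_isWalk he₀ hWH hW he
  have hW₀ : W ≠ [] := List.ne_nil_of_mem (hcover e₀ (by simpa using sieveSameC_refl he₀))
  obtain ⟨X, ⟨e₁, he₁, hXdec⟩, hXinc⟩ := hgood.exists_var_of_closed_isWalk hW hW₀
  refine ⟨H.filter fun e => ¬ (sieveSameC src tgt H e₁ e ∧ X ∈ Dec e), X, e₁,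
    (hsame e₁ he₁).2.1, hXdec, fun e he => hXinc e (hcover e ?_), fun e => by simp⟩
  simpa using (hsame e₁ he₁).trans he

end Components

theorem stmt8_general {V ι Var : Type*} [Fintype ι]
    (src tgt : ι → V) (Dec Inc : ι → Finset Var)
    (hgood : ∀ (k : ℕ), 0 < k → ∀ c : ℕ → ι, (∀ i, c (i + k) = c i) →
      (∀ i, tgt (c i) = src (c (i + 1))) →
      ∃ X : Var, (∃ i, X ∈ Dec (c i)) ∧ ∀ j, X ∉ Inc (c j))
    (n : ℕ) (H : ℕ → Finset ι)
    (hstuck : ∀ H' : Finset ι, ¬ sieveStep src tgt Dec Inc (H n) H') :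
    ∀ e : ι, ¬ sieveInside src tgt (H n) e := fun _ he =>
  let ⟨H', hstep⟩ := CycleHypothesis.exists_sieveStep hgood he
  hstuck H' hstep

/-- Termination completeness of Sieve. If every cycle of the graph
contains an edge decrementing a variable `X` such that no edge of the cycle increments
`X`, then when Sieve (run from the full edge set) stops, the remaining graph is
acyclic. -/
theorem stmt8 {V ι Var : Type*} [Fintype V] [Fintype ι] [Fintype Var]
    (src tgt : ι → V) (Dec Inc : ι → Finset Var)
    (hgood : ∀ (k : ℕ), 0 < k → ∀ c : ℕ → ι, (∀ i, c (i + k) = c i) →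
      (∀ i, tgt (c i) = src (c (i + 1))) →
      ∃ X : Var, (∃ i, X ∈ Dec (c i)) ∧ ∀ j, X ∉ Inc (c j))
    (n : ℕ) (H : ℕ → Finset ι) (h0 : H 0 = Finset.univ)
    (hstep : ∀ i < n, sieveStep src tgt Dec Inc (H i) (H (i + 1)))
    (hstuck : ∀ H' : Finset ι, ¬ sieveStep src tgt Dec Inc (H n) H') :
    ∀ e : ι, ¬ sieveInside src tgt (H n) e :=
  stmt8_general src tgt Dec Inc hgood n H hstuck
end

section
/- Let π be a strong cyclic solution of a finite FOND state model (S, s₀, A, F, G). Then every infinite π-trajectory that is fair reaches a goal state; equivalently, every infinite π-trajectory avoiding goal states is unfair: there is a recurrent state s and a successor s' ∈ F(π(s), s) such that the transition (s, s') occurs only finitely often. -/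
/-- One step of the execution of policy `π` in a FOND state model with applicable-action
map `A`, non-deterministic transition function `Fn`: `π s` is defined, applicable in `s`,
and `s'` is a possible successor. -/
def fondStep {S Act : Type*} (A : S → Set Act) (Fn : Act → S → Set S)
    (π : S → Option Act) (s s' : S) : Prop :=
  ∃ a, π s = some a ∧ a ∈ A s ∧ s' ∈ Fn a s

/-- `π` is a strong cyclic solution of the FOND state model `(S, s₀, A, Fn, G)`:
for every `π`-trajectory from `s₀` to `s` there is a `π`-trajectory from `s` to a goal. -/
def strongCyclic {S Act : Type*} (s₀ : S) (A : S → Set Act) (Fn : Act → S → Set S)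
    (G : Set S) (π : S → Option Act) : Prop :=
  ∀ s, Relation.ReflTransGen (fondStep A Fn π) s₀ s →
    ∃ t ∈ G, Relation.ReflTransGen (fondStep A Fn π) s t

/-- If `π` is a strong cyclic solution of a finite FOND state model, then
every infinite `π`-trajectory from `s₀` avoiding goal states is unfair: there is a
recurrent state `s` and a possible successor `s'` of `s` under `π` such that the
transition `(s, s')` occurs only finitely often. -/
theorem stmt12 {S Act : Type*} [Fintype S] (s₀ : S) (A : S → Set Act)
    (Fn : Act → S → Set S) (G : Set S) (π : S → Option Act)
    (habs : ∀ s ∈ G, π s = none)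
    (hsc : strongCyclic s₀ A Fn G π)
    (σ : ℕ → S) (h0 : σ 0 = s₀)
    (hstep : ∀ i, fondStep A Fn π (σ i) (σ (i + 1)))
    (hng : ∀ i, σ i ∉ G) :
    ∃ s s' : S, {i | σ i = s}.Infinite ∧ fondStep A Fn π s s' ∧
      {i | σ i = s ∧ σ (i + 1) = s'}.Finite := by
  by_contra hcon
  push_neg at hcon
  -- fairness: every recurrent state and possible successor gives infinitely many transitions
  have hfair : ∀ s s', {i | σ i = s}.Infinite → fondStep A Fn π s s' →
      {i | σ i = s ∧ σ (i + 1) = s'}.Infinite := by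
    intro s s' hs hst
    exact hcon s s' hs hst
  -- recurrent states are closed under fondStep
  have hclosed : ∀ s s', {i | σ i = s}.Infinite → fondStep A Fn π s s' →
      {i | σ i = s'}.Infinite := by
    intro s s' hs hst
    have htr := hfair s s' hs hst
    have : ((· + 1) '' {i | σ i = s ∧ σ (i + 1) = s'}) ⊆ {i | σ i = s'} := by
      rintro j ⟨i, ⟨_, hi2⟩, rfl⟩
      exact hi2
    exact Set.Infinite.mono this (htr.image (Set.injOn_of_injective (add_left_injective 1)))
  -- states reachable from a recurrent state are recurrent
  have hreach : ∀ s t, Relation.ReflTransGen (fondStep A Fn π) s t →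
      {i | σ i = s}.Infinite → {i | σ i = t}.Infinite := by
    intro s t h
    induction h with
    | refl => exact id
    | tail _ hbc ih => exact fun hs => hclosed _ _ (ih hs) hbc
  -- every σ i is reachable from s₀
  have hreach0 : ∀ i, Relation.ReflTransGen (fondStep A Fn π) s₀ (σ i) := by
    intro i
    induction i with
    | zero => rw [h0]
    | succ n ih => exact ih.tail (hstep n)
  -- pigeonhole: some state is recurrent
  obtain ⟨s, hs⟩ := Finite.exists_infinite_fiber σ
  have hs' : {i | σ i = s}.Infinite := by
    rw [← Set.infinite_coe_iff]
    exact hs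
  -- s is reachable from s₀
  obtain ⟨i, hi⟩ := hs'.nonempty
  have hsr : Relation.ReflTransGen (fondStep A Fn π) s₀ s := hi ▸ hreach0 i
  obtain ⟨t, htG, hst⟩ := hsc s hsr
  have : {i | σ i = t}.Infinite := hreach s t hst hs'
  obtain ⟨j, hj⟩ := this.nonempty
  exact hng j (hj ▸ htG)
end

section
/- Conversely, if π is a policy for a finite FOND state model such that π is defined and applicable at every π-reachable non-goal state, and every fair infinite π-trajectory from s₀ reaches a goal state, then π is a strong cyclic solution. -/
/-!
Suppose some state `s` reachable from `s₀` has no path to a goal. Then every state reachable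
from `s` is a non-goal state, so `π` acts there and the state has a successor. On this part of
the (finite) graph run a rotor-router walk from `s`: on its `k`-th visit to a state `y` it
leaves along the `k`-th entry of a fixed enumeration of the successors of `y` in which every
successor occurs infinitely often. This walk is fair, and prefixing it with a path from `s₀`
to `s` keeps it fair. By hypothesis the resulting trajectory from `s₀` reaches a goal, yet
goal states admit no step.
-/

open Relation Filter

theorem Nat.infinite_setOf_succ_iff {p : ℕ → Prop} :
    {n | p (n + 1)}.Infinite ↔ {n | p n}.Infinite := by
  rw [← Nat.frequently_atTop_iff_infinite, ← Nat.frequently_atTop_iff_infinite]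
  conv_rhs => rw [← map_add_atTop_eq_nat 1]
  rw [frequently_map]

theorem Finite.exists_nat_fun_infinite_fibers (α : Type*) [Finite α] [Nonempty α] :
    ∃ f : ℕ → α, ∀ a, {k | f k = a}.Infinite := by
  obtain ⟨n, ⟨e⟩⟩ := Finite.exists_equiv_fin α
  have hn : 0 < n := Fin.pos_iff_nonempty.2 ⟨e (Classical.arbitrary α)⟩
  refine ⟨fun k => e.symm ⟨k % n, Nat.mod_lt k hn⟩, fun a => ?_⟩
  refine Set.infinite_of_injective_forall_mem (f := fun m => (e a : ℕ) + n * m)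
    (fun m m' h => by simpa [hn.ne'] using h) fun m => ?_
  simp [Nat.mod_eq_of_lt (e a).isLt]

section Fairness

variable {S : Type*} (r : S → S → Prop)

def IsFair (σ : ℕ → S) : Prop :=
  ∀ s s', {i | σ i = s}.Infinite → r s s' → {i | σ i = s ∧ σ (i + 1) = s'}.Infinite

variable {r}

theorem IsFair.cons {σ : ℕ → S} (hσ : IsFair r σ) (x : S) : IsFair r (Stream'.cons x σ) := by
  intro s s' hs hss'
  rw [← Nat.infinite_setOf_succ_iff] at hs ⊢
  exact hσ s s' hs hss'

theorem exists_fair_trajectory_of_reflTransGen {x y : S} (hxy : ReflTransGen r x y)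
    (hy : ∃ σ : ℕ → S, σ 0 = y ∧ (∀ i, r (σ i) (σ (i + 1))) ∧ IsFair r σ) :
    ∃ σ : ℕ → S, σ 0 = x ∧ (∀ i, r (σ i) (σ (i + 1))) ∧ IsFair r σ := by
  induction hxy using ReflTransGen.head_induction_on with
  | refl => exact hy
  | head hxz _ ih =>
    obtain ⟨σ, hσ0, hσr, hσfair⟩ := ih
    refine ⟨Stream'.cons _ σ, rfl, fun i => ?_, hσfair.cons _⟩
    cases i with
    | zero => show r _ (σ 0); rwa [hσ0]
    | succ i => exact hσr i

end Fairness

section RotorWalk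

variable {S : Type*}

theorem exists_successor_enumeration [Finite S] (r : S → S → Prop) :
    ∃ next : S → ℕ → S, ∀ y z, r y z → (∀ k, r y (next y k)) ∧ {k | next y k = z}.Infinite := by
  have (y : S) : ∃ g : ℕ → S, ∀ z, r y z → (∀ k, r y (g k)) ∧ {k | g k = z}.Infinite := by
    by_cases hy : ∃ z, r y z
    · have : Nonempty {z // r y z} := nonempty_subtype.2 hy
      obtain ⟨f, hf⟩ := Finite.exists_nat_fun_infinite_fibers {z // r y z}
      refine ⟨fun k => f k, fun z hz => ⟨fun k => (f k).2, ?_⟩⟩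
      simpa only [Subtype.ext_iff] using hf ⟨z, hz⟩
    · exact ⟨fun _ => y, fun z hz => (hy ⟨z, hz⟩).elim⟩
  choose next hnext using this
  exact ⟨next, fun y => hnext y⟩

variable [DecidableEq S] (next : S → ℕ → S)

def rotorStep (p : S × (S → ℕ)) : S × (S → ℕ) :=
  (next p.1 (p.2 p.1), Function.update p.2 p.1 (p.2 p.1 + 1))

def rotorWalk (x : S) (n : ℕ) : S :=
  ((rotorStep next)^[n] (x, 0)).1

theorem rotorStep_iterate_snd (x y : S) (n : ℕ) :
    ((rotorStep next)^[n] (x, 0)).2 y = Nat.count (fun i => rotorWalk next x i = y) n := by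
  induction n with
  | zero => rfl
  | succ n ih =>
    rw [Function.iterate_succ_apply', Nat.count_succ, ← ih, rotorWalk]
    by_cases h : ((rotorStep next)^[n] (x, 0)).1 = y
    · subst h; simp [rotorStep]
    · simp [rotorStep, h, Ne.symm h]

theorem rotorWalk_succ (x : S) (n : ℕ) :
    rotorWalk next x (n + 1) =
      next (rotorWalk next x n)
        (Nat.count (fun i => rotorWalk next x i = rotorWalk next x n) n) := by
  rw [← rotorStep_iterate_snd, rotorWalk, Function.iterate_succ_apply']
  rfl

end RotorWalk

section FairTrajectory

variable {S : Type*} {r : S → S → Prop}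

theorem isFair_of_succ_eq_next [DecidableEq S] {next : S → ℕ → S}
    (hnext : ∀ y z, r y z → {k | next y k = z}.Infinite) {σ : ℕ → S}
    (hσ : ∀ n, σ (n + 1) = next (σ n) (Nat.count (fun i => σ i = σ n) n)) : IsFair r σ := by
  intro y z hy hyz
  have hvisits : (Set.ofPred fun i => σ i = y).Infinite := hy
  refine ((hnext y z hyz).image (Nat.nth_strictMono hvisits).injective.injOn).mono ?_
  -- the `k`-th visit to `y` is preceded by exactly `k` visits, so it leaves along `next y k`
  rintro _ ⟨k, hk, rfl⟩
  have hkth : σ (Nat.nth _ k) = y := Nat.nth_mem_of_infinite hvisits k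
  refine ⟨hkth, ?_⟩
  rw [hσ, hkth, Nat.count_nth_of_infinite hvisits]
  exact hk

theorem exists_fair_trajectory [Finite S] {x : S} (h : ∀ y, ReflTransGen r x y → ∃ z, r y z) :
    ∃ σ : ℕ → S, σ 0 = x ∧ (∀ i, r (σ i) (σ (i + 1))) ∧ IsFair r σ := by
  classical
  obtain ⟨next, hnext⟩ := exists_successor_enumeration r
  have hstep {n : ℕ} (hn : ReflTransGen r x (rotorWalk next x n)) :
      r (rotorWalk next x n) (rotorWalk next x (n + 1)) := by
    obtain ⟨z, hz⟩ := h _ hn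
    rw [rotorWalk_succ]
    exact (hnext _ z hz).1 _
  have hreach (n : ℕ) : ReflTransGen r x (rotorWalk next x n) := by
    induction n with
    | zero => exact .refl
    | succ n ih => exact ih.tail (hstep ih)
  exact ⟨rotorWalk next x, rfl, fun n => hstep (hreach n),
    isFair_of_succ_eq_next (fun y z hyz => (hnext y z hyz).2) (rotorWalk_succ next x)⟩

end FairTrajectory

/-- Conversely, if `π` is defined and applicable at every `π`-reachable
non-goal state (with goal states absorbing and `Fn a s` nonempty for applicable `a`),
and every fair infinite `π`-trajectory from `s₀` reaches a goal state, then `π` is a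
strong cyclic solution. -/
theorem stmt13 {S Act : Type*} [Fintype S] (s₀ : S) (A : S → Set Act)
    (Fn : Act → S → Set S) (G : Set S) (π : S → Option Act)
    (hF : ∀ (a : Act) (s : S), a ∈ A s → (Fn a s).Nonempty)
    (habs : ∀ s ∈ G, π s = none)
    (happ : ∀ s, Relation.ReflTransGen (fondStep A Fn π) s₀ s → s ∉ G →
      ∃ a, π s = some a ∧ a ∈ A s)
    (hfair : ∀ σ : ℕ → S, σ 0 = s₀ →
      (∀ i, fondStep A Fn π (σ i) (σ (i + 1))) →
      (∀ s s' : S, {i | σ i = s}.Infinite → fondStep A Fn π s s' →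
        {i | σ i = s ∧ σ (i + 1) = s'}.Infinite) →
      ∃ i, σ i ∈ G) :
    strongCyclic s₀ A Fn G π := by
  intro s hs
  by_contra! hdead
  have hlive : ∀ t, ReflTransGen (fondStep A Fn π) s t → ∃ t', fondStep A Fn π t t' := by
    intro t hst
    obtain ⟨a, hπ, haA⟩ := happ t (hs.trans hst) fun htG => hdead t htG hst
    obtain ⟨t', ht'⟩ := hF a t haA
    exact ⟨t', a, hπ, haA, ht'⟩
  obtain ⟨σ, hσ0, hσstep, hσfair⟩ :=
    exists_fair_trajectory_of_reflTransGen hs (exists_fair_trajectory hlive)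
  obtain ⟨i, hiG⟩ := hfair σ hσ0 hσstep hσfair
  obtain ⟨a, hπ, -⟩ := hσstep i
  simp [habs _ hiG] at hπ
end

section
/- Correspondence between QNP trajectories and boolean-abstraction trajectories: let Q be a QNP and P = T_D(Q) its direct translation. For any policy π, if τ = s₀, s₁, … is an (infinite) ε-bounded π-trajectory in Q, then the sequence of boolean abstractions τ̄ = s̄₀, s̄₁, … is an (infinite) π-trajectory in P, where s̄ records the truth values of the boolean variables and of the atoms X = 0. -/
/-- A boolean (abstract) state of a QNP: a truth valuation of the propositional
variables `P` and of the atoms `X = 0` for the numerical variables `N`. -/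
abbrev QNP.BState (P N : Type*) := (P → Bool) × (N → Bool)

/-- A (concrete) QNP state: a valuation of the propositional variables and a
non-negative real value for each numerical variable (non-negativity is enforced in
the transition relation). -/
abbrev QNP.QState (P N : Type*) := (P → Bool) × (N → ℝ)

/-- The boolean abstraction of a QNP state: it records the truth values of the
propositions and of the atoms `X = 0`. -/
noncomputable def QNP.absQ {P N : Type*} (s : QNP.QState P N) : QNP.BState P N :=
  (s.1, fun X => decide (s.2 X = 0))

/-- A (semantic) QNP: actions with applicability conditions on boolean states,
boolean effects, and qualitative numerical effects `Inc(X)` / `Dec(X)`.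
Actions with a `Dec(X)` effect require the precondition `X > 0`. -/
structure QNP (P N Act : Type*) where
  appl : Act → QNP.BState P N → Prop
  effP : Act → P → Option Bool
  inc : Act → N → Prop
  dec : Act → N → Prop
  inc_dec_disjoint : ∀ a X, ¬ (inc a X ∧ dec a X)
  dec_pre : ∀ a X b, dec a X → appl a b → b.2 X = false

/-- An `ε`-bounded transition of the QNP `M` by action `a`: values are non-negative,
`a` is applicable in the abstraction of `s`, boolean effects are applied, incremented
variables strictly increase by at least `ε`, decremented variables strictly decrease
by at least `ε` (or drop to exactly `0` from a value below `ε`), and all other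
variables are unchanged. -/
def QNP.QStep {P N Act : Type*} (M : QNP P N Act) (ε : ℝ) (a : Act)
    (s s' : QNP.QState P N) : Prop :=
  (∀ X, 0 ≤ s.2 X) ∧ (∀ X, 0 ≤ s'.2 X) ∧
  M.appl a (QNP.absQ s) ∧
  (∀ p, s'.1 p = (M.effP a p).getD (s.1 p)) ∧
  (∀ X, M.inc a X → s.2 X + ε ≤ s'.2 X) ∧
  (∀ X, M.dec a X → s'.2 X < s.2 X ∧
    (s'.2 X ≤ s.2 X - ε ∨ (s'.2 X = 0 ∧ s.2 X < ε))) ∧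
  (∀ X, ¬ M.inc a X → ¬ M.dec a X → s'.2 X = s.2 X)

/-- A transition of the direct translation `T_D(Q)`: a FOND step over boolean states
where `Inc(X)` effects deterministically make `X > 0` (i.e. `X = 0` false) and
`Dec(X)` effects are non-deterministic (`X > 0 | X = 0`, no constraint); atoms of
unaffected variables are unchanged. -/
def QNP.PStep {P N Act : Type*} (M : QNP P N Act) (a : Act)
    (b b' : QNP.BState P N) : Prop :=
  M.appl a b ∧
  (∀ p, b'.1 p = (M.effP a p).getD (b.1 p)) ∧
  (∀ X, M.inc a X → b'.2 X = false) ∧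
  (∀ X, ¬ M.inc a X → ¬ M.dec a X → b'.2 X = b.2 X)

/-- For any policy `π` (depending only on boolean abstractions), if
`τ` is an infinite `ε`-bounded `π`-trajectory in the QNP `M`, then the sequence of
boolean abstractions of `τ` is an infinite `π`-trajectory of the direct translation
`T_D(M)`. -/
theorem stmt14 {P N Act : Type*} (M : QNP P N Act)
    (π : QNP.BState P N → Option Act) (ε : ℝ) (hε : 0 < ε)
    (τ : ℕ → QNP.QState P N)
    (htraj : ∀ i, ∃ a, π (QNP.absQ (τ i)) = some a ∧ QNP.QStep M ε a (τ i) (τ (i + 1))) :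
    ∀ i, ∃ a, π (QNP.absQ (τ i)) = some a ∧
      QNP.PStep M a (QNP.absQ (τ i)) (QNP.absQ (τ (i + 1))) := by
  intro i
  obtain ⟨a, hπ, h0, h1, happl, heff, hinc, hdec, hother⟩ := htraj i
  refine ⟨a, hπ, happl, heff, ?_, ?_⟩
  · intro X hX
    have := hinc X hX
    have h0X := h0 X
    simp only [QNP.absQ, decide_eq_false_iff_not]
    linarith
  · intro X hi hd
    simp only [QNP.absQ, hother X hi hd]
end

section
/- Let Q be a QNP with direct FOND translation P = T_D(Q), and let π be a policy. If there is an infinite π-trajectory in P that is non-terminating, i.e., for every variable X such that π applies a Dec(X) action at some recurrent state of the trajectory, π also applies an Inc(X) action at some recurrent state of the trajectory, then for every ε > 0 there exists an infinite ε-bounded π-trajectory in Q whose boolean abstraction follows the given trajectory. -/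
/-- Non-terminating boolean trajectories lift to real-valued
trajectories. If `β` is an infinite `π`-trajectory of the direct translation
`T_D(M)` that is non-terminating (every variable decremented at a recurrent state is
also incremented at a recurrent state), then for every `ε > 0` there is an infinite
`ε`-bounded `π`-trajectory of the QNP `M` whose boolean abstraction is `β`. -/
theorem stmt15 {P N Act : Type*} [Fintype P] [Fintype N] (M : QNP P N Act)
    (π : QNP.BState P N → Option Act)
    (β : ℕ → QNP.BState P N)
    (htraj : ∀ i, ∃ a, π (β i) = some a ∧ QNP.PStep M a (β i) (β (i + 1)))
    (hnonterm : ∀ X : N,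
      (∃ b a, {i | β i = b}.Infinite ∧ π b = some a ∧ M.dec a X) →
      (∃ b' a', {i | β i = b'}.Infinite ∧ π b' = some a' ∧ M.inc a' X)) :
    ∀ ε : ℝ, 0 < ε → ∃ τ : ℕ → QNP.QState P N,
      (∀ i, QNP.absQ (τ i) = β i) ∧
      (∀ i, ∃ a, π (β i) = some a ∧ QNP.QStep M ε a (τ i) (τ (i + 1))) := by
  classical
  intro ε hε
  choose a hπa hstep using htraj
  -- the set of future decrements of X before the next increment
  set S : N → ℕ → Set ℕ := fun X i =>
    {j | i ≤ j ∧ M.dec (a j) X ∧ ∀ k, i ≤ k → k ≤ j → ¬ M.inc (a k) X} with hS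
  have hfin : ∀ X i, (S X i).Finite := by
    intro X i
    by_cases hinc : ∃ j, i ≤ j ∧ M.inc (a j) X
    · obtain ⟨j0, hj0i, hj0inc⟩ := hinc
      apply Set.Finite.subset (Set.finite_Icc i j0)
      rintro j ⟨hij, hdec, hnoinc⟩
      refine ⟨hij, ?_⟩
      by_contra h
      push_neg at h
      exact hnoinc j0 hj0i h.le hj0inc
    · push_neg at hinc
      by_contra hInf
      have hsub : S X i ⊆ ⋃ b ∈ (Finset.univ : Finset (QNP.BState P N)),
          {j | j ∈ S X i ∧ β j = b} := by
        intro j hj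
        simp only [Set.mem_iUnion, Finset.mem_coe, Finset.mem_univ, Set.mem_setOf_eq,
          exists_prop, true_and]
        exact ⟨β j, hj, rfl⟩
      have hex : ∃ b : QNP.BState P N, {j | j ∈ S X i ∧ β j = b}.Infinite := by
        by_contra hb
        push_neg at hb
        exact hInf (Set.Finite.subset
          (Set.Finite.biUnion (Finset.univ : Finset (QNP.BState P N)).finite_toSet
            (fun b _ => hb b)) hsub)
      obtain ⟨b, hbInf⟩ := hex
      obtain ⟨j1, hj1⟩ := hbInf.nonempty
      have hrec : {k | β k = b}.Infinite := hbInf.mono (fun j hj => hj.2)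
      have hπb : π b = some (a j1) := by rw [← hj1.2]; exact hπa j1
      obtain ⟨b', a', hInf', hπ', hinc'⟩ := hnonterm X ⟨b, a j1, hrec, hπb, hj1.1.2.1⟩
      have hexj : ∃ j, i ≤ j ∧ β j = b' := by
        by_contra h
        push_neg at h
        refine hInf' (Set.Finite.subset (Set.finite_Iio i) ?_)
        intro j hj
        by_contra hji
        simp only [Set.mem_Iio, not_lt] at hji
        exact h j hji hj
      obtain ⟨j, hij, hbj⟩ := hexj
      have haj : a j = a' := by
        have h1 := hπa j
        rw [hbj, hπ'] at h1
        exact (Option.some_injective _ h1.symm)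
      exact hinc j hij (haj ▸ hinc')
  set d : N → ℕ → ℕ := fun X i => (S X i).ncard with hd
  -- counting lemmas
  have hd_dec : ∀ X i, M.dec (a i) X → d X i = d X (i + 1) + 1 := by
    intro X i hD
    have hins : S X i = insert i (S X (i + 1)) := by
      ext j
      simp only [hS, Set.mem_insert_iff, Set.mem_setOf_eq]
      constructor
      · rintro ⟨hij, hdec, hno⟩
        rcases eq_or_lt_of_le hij with h | h
        · left; exact h.symm
        · right
          exact ⟨h, hdec, fun k hk1 hk2 => hno k (le_trans (Nat.le_succ i) hk1) hk2⟩
      · rintro (h | ⟨hij, hdec2, hno⟩)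
        · rw [h]
          refine ⟨le_rfl, hD, fun k hk1 hk2 => ?_⟩
          intro hi
          have hk : k = i := le_antisymm hk2 hk1
          rw [hk] at hi
          exact M.inc_dec_disjoint (a i) X ⟨hi, hD⟩
        · refine ⟨by omega, hdec2, fun k hk1 hk2 => ?_⟩
          rcases eq_or_lt_of_le hk1 with h | h
          · subst h
            exact fun hi => M.inc_dec_disjoint (a i) X ⟨hi, hD⟩
          · exact hno k (by omega) hk2
    have hnm : i ∉ S X (i + 1) := by
      simp only [hS, Set.mem_setOf_eq]
      intro h
      omega
    show (S X i).ncard = (S X (i + 1)).ncard + 1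
    rw [hins, Set.ncard_insert_of_notMem hnm (hfin X (i + 1))]
  have hd_stay : ∀ X i, ¬ M.inc (a i) X → ¬ M.dec (a i) X → d X i = d X (i + 1) := by
    intro X i hI hD
    have heq : S X i = S X (i + 1) := by
      ext j
      simp only [hS, Set.mem_setOf_eq]
      constructor
      · rintro ⟨hij, hdec, hno⟩
        have hji : j ≠ i := by rintro rfl; exact hD hdec
        refine ⟨by omega, hdec, fun k hk1 hk2 => hno k (by omega) hk2⟩
      · rintro ⟨hij, hdec, hno⟩
        refine ⟨by omega, hdec, fun k hk1 hk2 => ?_⟩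
        rcases eq_or_lt_of_le hk1 with h | h
        · subst h; exact hI
        · exact hno k (by omega) hk2
    show (S X i).ncard = (S X (i + 1)).ncard
    rw [heq]
  -- the real-valued trajectory
  let v : N → ℕ → ℝ := fun X i =>
    Nat.rec (if (β 0).2 X then 0 else ε * (d X 0 + 1))
      (fun i vi =>
        if M.inc (a i) X then max (vi + ε) (ε * (d X (i + 1) + 1))
        else if M.dec (a i) X then (if (β (i + 1)).2 X then 0 else vi - ε)
        else vi) i
  have hv0 : ∀ X, v X 0 = if (β 0).2 X then 0 else ε * (d X 0 + 1) := fun X => rfl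
  have hvs : ∀ X i, v X (i + 1) =
      (if M.inc (a i) X then max (v X i + ε) (ε * (d X (i + 1) + 1))
       else if M.dec (a i) X then (if (β (i + 1)).2 X then 0 else v X i - ε)
       else v X i) := fun X i => rfl
  -- invariant
  have hinv : ∀ i X, ((β i).2 X = true → v X i = 0) ∧
      ((β i).2 X = false → ε * (d X i + 1) ≤ v X i) := by
    intro i
    induction i with
    | zero =>
      intro X
      rw [hv0]
      cases h : (β 0).2 X <;> simp [h]
    | succ i ih =>
      intro X
      obtain ⟨happl, heff, hincX, hframe⟩ := hstep i
      by_cases hI : M.inc (a i) X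
      · have hb' : (β (i + 1)).2 X = false := hincX X hI
        rw [hvs, if_pos hI]
        constructor
        · intro h; rw [hb'] at h; exact absurd h (by simp)
        · intro _; exact le_max_right _ _
      · by_cases hD : M.dec (a i) X
        · have hb : (β i).2 X = false := M.dec_pre _ _ _ hD happl
          have hge := (ih X).2 hb
          have hdd : d X i = d X (i + 1) + 1 := hd_dec X i hD
          rw [hvs, if_neg hI, if_pos hD]
          cases hb' : (β (i + 1)).2 X with
          | false =>
            refine ⟨fun h => by simp at h, fun _ => ?_⟩
            rw [if_neg (by simp)]
            have hcast : (d X i : ℝ) = (d X (i + 1) : ℝ) + 1 := by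
              rw [hdd]; push_cast; ring
            rw [hcast] at hge
            linarith
          | true =>
            exact ⟨fun _ => by rw [if_pos rfl], fun h => by simp at h⟩
        · have hb' : (β (i + 1)).2 X = (β i).2 X := hframe X hI hD
          have hdd : d X i = d X (i + 1) := hd_stay X i hI hD
          rw [hvs, if_neg hI, if_neg hD, hb', ← hdd]
          exact ih X
  have hpos : ∀ i X, (β i).2 X = false → ε ≤ v X i := by
    intro i X h
    have h2 := (hinv i X).2 h
    have h1 : ε ≤ ε * (d X i + 1) := by
      nlinarith [Nat.cast_nonneg (d X i) (α := ℝ)]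
    linarith
  have hnn : ∀ i X, 0 ≤ v X i := by
    intro i X
    cases h : (β i).2 X
    · linarith [hpos i X h]
    · rw [(hinv i X).1 h]
  refine ⟨fun i => ((β i).1, fun X => v X i), ?_, ?_⟩
  case refine_1 =>
    intro i
    unfold QNP.absQ
    refine Prod.ext rfl (funext fun X => ?_)
    cases h : (β i).2 X
    · simp only [decide_eq_false_iff_not]
      have := hpos i X h
      intro h0
      rw [h0] at this
      linarith
    · simp [(hinv i X).1 h]
  case refine_2 =>
    intro i
    obtain ⟨happl, heff, hincX, hframe⟩ := hstep i
    refine ⟨a i, hπa i, hnn i, hnn (i + 1), ?_, fun p => heff p, ?_, ?_, ?_⟩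
    · have : QNP.absQ (((β i).1, fun X => v X i) : QNP.QState P N) = β i := by
        unfold QNP.absQ
        refine Prod.ext rfl (funext fun X => ?_)
        cases h : (β i).2 X
        · simp only [decide_eq_false_iff_not]
          have := hpos i X h
          intro h0
          rw [h0] at this
          linarith
        · simp [(hinv i X).1 h]
      rw [this]
      exact happl
    · intro X hI
      show v X i + ε ≤ v X (i + 1)
      rw [hvs, if_pos hI]
      exact le_max_left _ _
    · intro X hD
      have hI : ¬ M.inc (a i) X := fun hi => M.inc_dec_disjoint (a i) X ⟨hi, hD⟩
      have hb : (β i).2 X = false := M.dec_pre _ _ _ hD happl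
      have hge := (hinv i X).2 hb
      have hdd : d X i = d X (i + 1) + 1 := hd_dec X i hD
      have hcast : (d X i : ℝ) = (d X (i + 1) : ℝ) + 1 := by
        rw [hdd]; push_cast; ring
      rw [hcast] at hge
      have hd1 : (0:ℝ) ≤ (d X (i + 1) : ℝ) := Nat.cast_nonneg _
      have hge2 : 2 * ε ≤ v X i := by nlinarith
      show v X (i + 1) < v X i ∧ (v X (i + 1) ≤ v X i - ε ∨ (v X (i + 1) = 0 ∧ v X i < ε))
      rw [hvs, if_neg hI, if_pos hD]
      cases hb' : (β (i + 1)).2 X with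
      | false =>
        rw [if_neg (by simp)]
        exact ⟨by linarith, Or.inl (le_refl _)⟩
      | true =>
        rw [if_pos rfl]
        exact ⟨by linarith, Or.inl (by linarith)⟩
    · intro X hI hD
      show v X (i + 1) = v X i
      rw [hvs, if_neg hI, if_neg hD]
end

section
/- Terminating policies yield only finite trajectories: let Q be a QNP with direct translation P = T_D(Q), and π a policy such that every infinite π-trajectory in P is terminating (its recurrent set contains a state applying a Dec(X) action for some X that is incremented at no recurrent state). Then for every ε > 0, every ε-bounded π-trajectory in Q is finite. -/
/-- Terminating policies yield only finite trajectories. If every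
infinite `π`-trajectory of the direct translation `T_D(M)` is terminating (some
variable is decremented at a recurrent state and incremented at no recurrent state),
then for every `ε > 0` there is no infinite `ε`-bounded `π`-trajectory of the QNP
`M` (every `ε`-bounded `π`-trajectory is finite). -/
theorem stmt16 {P N Act : Type*} [Fintype P] [Fintype N] (M : QNP P N Act)
    (π : QNP.BState P N → Option Act)
    (hterm : ∀ β : ℕ → QNP.BState P N,
      (∀ i, ∃ a, π (β i) = some a ∧ QNP.PStep M a (β i) (β (i + 1))) →
      ∃ (X : N) (b : QNP.BState P N) (a : Act),
        {i | β i = b}.Infinite ∧ π b = some a ∧ M.dec a X ∧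
        ∀ b' a', {i | β i = b'}.Infinite → π b' = some a' → ¬ M.inc a' X) :
    ∀ ε : ℝ, 0 < ε → ∀ τ : ℕ → QNP.QState P N,
      ¬ (∀ i, ∃ a, π (QNP.absQ (τ i)) = some a ∧
          QNP.QStep M ε a (τ i) (τ (i + 1))) := by
  intro ε hε τ h
  set β : ℕ → QNP.BState P N := fun i => QNP.absQ (τ i) with hβ
  -- The abstraction is an infinite π-trajectory in the direct translation
  have hP : ∀ i, ∃ a, π (β i) = some a ∧ QNP.PStep M a (β i) (β (i + 1)) := by
    intro i
    obtain ⟨a, hπa, hstep⟩ := h i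
    obtain ⟨hpos, hpos', happl, heffP, hinc, hdec, hfr⟩ := hstep
    refine ⟨a, hπa, happl, heffP, ?_, ?_⟩
    · intro Y hY
      have h1 := hinc Y hY
      have h2 := hpos Y
      have h0 : (τ (i + 1)).2 Y ≠ 0 := by intro hz; rw [hz] at h1; linarith
      simp [hβ, QNP.absQ, h0]
    · intro Y hYi hYd
      have := hfr Y hYi hYd
      simp [hβ, QNP.absQ, this]
  obtain ⟨X, b, a, hbinf, hπb, hdecX, hnoinc⟩ := hterm β hP
  -- all but finitely many indices are at recurrent states
  have hbad : {i | ¬ {j | β j = β i}.Infinite}.Finite := by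
    have hsub : {i | ¬ {j | β j = β i}.Infinite} ⊆
        ⋃ b' ∈ {b' : QNP.BState P N | ¬ {j | β j = b'}.Infinite}, {j | β j = b'} := by
      intro i hi
      simp only [Set.mem_iUnion, Set.mem_setOf_eq]
      exact ⟨β i, hi, rfl⟩
    exact Set.Finite.subset
      (Set.Finite.biUnion (Set.toFinite _) (fun b' hb' => Set.not_infinite.mp hb')) hsub
  obtain ⟨n0, hn0⟩ := hbad.bddAbove
  have hrec : ∀ i, n0 + 1 ≤ i → {j | β j = β i}.Infinite := by
    intro i hi
    by_contra hcon
    have := hn0 (Set.mem_setOf.mpr hcon)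
    omega
  -- X is non-increasing after n0
  have hmono1 : ∀ i, n0 + 1 ≤ i → (τ (i + 1)).2 X ≤ (τ i).2 X := by
    intro i hi
    obtain ⟨ai, hπai, hstep⟩ := h i
    obtain ⟨hpos, hpos', happl, heffP, hinc, hdec, hfr⟩ := hstep
    by_cases hI : M.inc ai X
    · exact absurd hI (hnoinc (β i) ai (hrec i hi) hπai)
    by_cases hD : M.dec ai X
    · exact le_of_lt (hdec X hD).1
    · exact le_of_eq (hfr X hI hD)
  have hmono : ∀ i j, n0 + 1 ≤ i → i ≤ j → (τ j).2 X ≤ (τ i).2 X := by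
    intro i j hi hij
    induction j, hij using Nat.le_induction with
    | base => exact le_rfl
    | succ j hij ih => exact le_trans (hmono1 j (le_trans hi hij)) ih
  -- at every visit to b the value of X is positive
  have hposvisit : ∀ i, β i = b → 0 < (τ i).2 X := by
    intro i hib
    obtain ⟨ai, hπai, hstep⟩ := h i
    have hπai' : π b = some ai := by rw [← hib]; exact hπai
    have hai : ai = a := by
      rw [hπb] at hπai'; exact (Option.some.inj hπai').symm
    have happl := hstep.2.2.1
    rw [hai] at happl
    have hfalse := M.dec_pre a X (QNP.absQ (τ i)) hdecX happl
    have hne : (τ i).2 X ≠ 0 := by simpa [QNP.absQ] using hfalse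
    exact lt_of_le_of_ne (hstep.1 X) (Ne.symm hne)
  -- at every late visit to b, X drops by at least ε
  have hdrop : ∀ i, n0 + 1 ≤ i → β i = b → (τ (i + 1)).2 X ≤ (τ i).2 X - ε := by
    intro i hi hib
    obtain ⟨ai, hπai, hstep⟩ := h i
    have hπai' : π b = some ai := by rw [← hib]; exact hπai
    have hai : ai = a := by
      rw [hπb] at hπai'; exact (Option.some.inj hπai').symm
    obtain ⟨hpos, hpos', happl, heffP, hinc, hdec, hfr⟩ := hstep
    rw [hai] at hdec
    rcases (hdec X hdecX).2 with h1 | ⟨h1, h2⟩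
    · exact h1
    -- drop to zero: contradicts a later visit to b
    · exfalso
      obtain ⟨j, hjb, hij⟩ := hbinf.exists_gt i
      have hjpos := hposvisit j hjb
      have : (τ j).2 X ≤ (τ (i + 1)).2 X := hmono (i + 1) j (by omega) (by omega)
      rw [h1] at this
      linarith
  -- derive k·ε drops for all k
  have hiter : ∀ k : ℕ, ∃ i, n0 + 1 ≤ i ∧ (τ i).2 X ≤ (τ (n0 + 1)).2 X - k * ε := by
    intro k
    induction k with
    | zero => exact ⟨n0 + 1, le_rfl, by simp⟩
    | succ k ih =>
      obtain ⟨i, hi, hle⟩ := ih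
      obtain ⟨j, hjb, hij⟩ := hbinf.exists_gt i
      have h1 : (τ j).2 X ≤ (τ i).2 X := hmono i j hi (le_of_lt hij)
      have h2 := hdrop j (by omega) hjb
      refine ⟨j + 1, by omega, ?_⟩
      push_cast
      linarith
  obtain ⟨k, hk⟩ := exists_nat_gt ((τ (n0 + 1)).2 X / ε)
  obtain ⟨i, hi, hle⟩ := hiter k
  have hposi : 0 ≤ (τ i).2 X := (h i).choose_spec.2.1 X
  have : (τ (n0 + 1)).2 X < k * ε := by
    rw [div_lt_iff₀ hε] at hk; linarith
  linarith
end

section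
/- A policy π solves a QNP Q if and only if π is a strong cyclic solution of Q and every π-trajectory in Q (for every ε > 0, every ε-bounded trajectory) is finite. -/
/-- An `ε`-bounded step of policy `π` in the QNP `M`. -/
def QNP.piStep {P N Act : Type*} (M : QNP P N Act) (π : QNP.BState P N → Option Act)
    (ε : ℝ) (s s' : QNP.QState P N) : Prop :=
  ∃ a, π (QNP.absQ s) = some a ∧ QNP.QStep M ε a s s'

/-- An `ε`-bounded step of `π` from a non-goal state (trajectories end at the first
goal state, so only non-goal states may be stepped from). -/
def QNP.piStep' {P N Act : Type*} (M : QNP P N Act) (π : QNP.BState P N → Option Act)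
    (Gb : QNP.BState P N → Prop) (ε : ℝ) (s s' : QNP.QState P N) : Prop :=
  QNP.piStep M π ε s s' ∧ ¬ Gb (QNP.absQ s)

/-- `π` solves the QNP `M` (initial states `Init`, goal `Gb`): for every `ε > 0`,
every maximal `ε`-bounded `π`-trajectory reaches a goal state, i.e. there is no
infinite goal-avoiding `π`-trajectory from an initial state and no reachable non-goal
state where `π` is undefined or inapplicable. -/
def QNP.solves {P N Act : Type*} (M : QNP P N Act) (π : QNP.BState P N → Option Act)
    (Init : QNP.QState P N → Prop) (Gb : QNP.BState P N → Prop) : Prop :=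
  ∀ ε : ℝ, 0 < ε →
    (∀ σ : ℕ → QNP.QState P N, Init (σ 0) →
      ¬ (∀ i, QNP.piStep' M π Gb ε (σ i) (σ (i + 1)))) ∧
    (∀ s, (∃ s₀, Init s₀ ∧ Relation.ReflTransGen (QNP.piStep' M π Gb ε) s₀ s) →
      ¬ Gb (QNP.absQ s) → ∃ s', QNP.piStep M π ε s s')

/-- `π` is a strong cyclic solution of the QNP `M`: for every `π`-trajectory from an
initial state to a state `s`, there is a `π`-trajectory from `s` to a goal state. -/
def QNP.strongCyclicQ {P N Act : Type*} (M : QNP P N Act)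
    (π : QNP.BState P N → Option Act)
    (Init : QNP.QState P N → Prop) (Gb : QNP.BState P N → Prop) : Prop :=
  ∀ ε : ℝ, 0 < ε →
    ∀ s, (∃ s₀, Init s₀ ∧ Relation.ReflTransGen (QNP.piStep' M π Gb ε) s₀ s) →
      ∃ t, Relation.ReflTransGen (QNP.piStep' M π Gb ε) s t ∧ Gb (QNP.absQ t)

/-- Every `π`-trajectory of the QNP `M` is finite: for every `ε > 0` there is no
infinite `ε`-bounded `π`-trajectory starting at an initial state. -/
def QNP.terminating {P N Act : Type*} (M : QNP P N Act)
    (π : QNP.BState P N → Option Act)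
    (Init : QNP.QState P N → Prop) (Gb : QNP.BState P N → Prop) : Prop :=
  ∀ ε : ℝ, 0 < ε → ∀ σ : ℕ → QNP.QState P N, Init (σ 0) →
    ¬ (∀ i, QNP.piStep' M π Gb ε (σ i) (σ (i + 1)))

lemma path_of_rtg {α : Type*} {R : α → α → Prop} {a b : α}
    (h : Relation.ReflTransGen R a b) :
    ∃ (n : ℕ) (τ : ℕ → α), τ 0 = a ∧ τ n = b ∧ ∀ i < n, R (τ i) (τ (i + 1)) := by
  induction h with
  | refl => exact ⟨0, fun _ => a, rfl, rfl, fun i hi => absurd hi (by omega)⟩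
  | @tail b c hab hbc ih =>
    obtain ⟨n, τ, h0, hn, hs⟩ := ih
    refine ⟨n + 1, fun i => if i ≤ n then τ i else c, by simp [h0], by simp, ?_⟩
    intro i hi
    by_cases hin : i < n
    · simp only [if_pos (by omega : i ≤ n), if_pos (by omega : i + 1 ≤ n)]
      exact hs i hin
    · have hieq : i = n := by omega
      simp only [if_pos (le_of_eq hieq), if_neg (by omega : ¬ i + 1 ≤ n)]
      rw [hieq, hn]
      exact hbc

/-- a policy `π` solves the QNP `M` iff `π` is a strong cyclic solution
of `M` and every `π`-trajectory of `M` (for every `ε > 0`, every `ε`-bounded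
trajectory) is finite. -/
theorem stmt17 {P N Act : Type*} (M : QNP P N Act)
    (π : QNP.BState P N → Option Act)
    (Init : QNP.QState P N → Prop) (Gb : QNP.BState P N → Prop) :
    QNP.solves M π Init Gb ↔
      (QNP.strongCyclicQ M π Init Gb ∧ QNP.terminating M π Init Gb) := by
  constructor
  · intro h
    refine ⟨?_, fun ε hε => (h ε hε).1⟩
    intro ε hε s hs
    by_contra hb
    push_neg at hb
    obtain ⟨s₀, hInit, hreach⟩ := hs
    -- the set of "bad" states: reachable, and no goal reachable from them
    have claim : ∀ t : {t : QNP.QState P N //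
        Relation.ReflTransGen (QNP.piStep' M π Gb ε) s₀ t ∧
        ∀ u, Relation.ReflTransGen (QNP.piStep' M π Gb ε) t u → ¬ Gb (QNP.absQ u)},
        ∃ t' : {t : QNP.QState P N //
        Relation.ReflTransGen (QNP.piStep' M π Gb ε) s₀ t ∧
        ∀ u, Relation.ReflTransGen (QNP.piStep' M π Gb ε) t u → ¬ Gb (QNP.absQ u)},
        QNP.piStep' M π Gb ε t.1 t'.1 := by
      rintro ⟨t, hrt, hng⟩
      have hngt : ¬ Gb (QNP.absQ t) := hng t Relation.ReflTransGen.refl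
      obtain ⟨t', ht'⟩ := (h ε hε).2 t ⟨s₀, hInit, hrt⟩ hngt
      exact ⟨⟨t', hrt.tail ⟨ht', hngt⟩,
        fun u hu => hng u (Relation.ReflTransGen.head ⟨ht', hngt⟩ hu)⟩, ⟨ht', hngt⟩⟩
    choose g hg using claim
    have hBads : Relation.ReflTransGen (QNP.piStep' M π Gb ε) s₀ s ∧
        ∀ u, Relation.ReflTransGen (QNP.piStep' M π Gb ε) s u → ¬ Gb (QNP.absQ u) :=
      ⟨hreach, fun u hu hgu => hb u hu hgu⟩
    set tail : ℕ → {t : QNP.QState P N //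
        Relation.ReflTransGen (QNP.piStep' M π Gb ε) s₀ t ∧
        ∀ u, Relation.ReflTransGen (QNP.piStep' M π Gb ε) t u → ¬ Gb (QNP.absQ u)} :=
      fun n => g^[n] ⟨s, hBads⟩ with htaildef
    have htail : ∀ n, QNP.piStep' M π Gb ε (tail n).1 (tail (n + 1)).1 := by
      intro n
      have : tail (n + 1) = g (tail n) := Function.iterate_succ_apply' g n _
      rw [this]
      exact hg (tail n)
    have htail0 : (tail 0).1 = s := rfl
    obtain ⟨n, τ, h0, hn, hsteps⟩ := path_of_rtg hreach
    set σ : ℕ → QNP.QState P N := fun i => if i < n then τ i else (tail (i - n)).1 with hσdef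
    have hσ0 : σ 0 = s₀ := by
      by_cases h0n : 0 < n
      · simp [hσdef, h0n, h0]
      · have hn0 : n = 0 := by omega
        have hss : s = s₀ := by rw [← hn, hn0, h0]
        simp [hσdef, hn0, htail0, hss]
    have hσstep : ∀ i, QNP.piStep' M π Gb ε (σ i) (σ (i + 1)) := by
      intro i
      by_cases hi : i + 1 < n
      · simp only [hσdef, if_pos (by omega : i < n), if_pos hi]
        exact hsteps i (by omega)
      · by_cases hi2 : i < n
        · have hin : i + 1 = n := by omega
          simp only [hσdef, if_pos hi2, if_neg (by omega : ¬ i + 1 < n)]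
          have : (tail (i + 1 - n)).1 = s := by
            rw [hin]; simp [htail0]
          rw [this, ← hn, ← hin]
          exact hsteps i (by omega)
        · simp only [hσdef, if_neg hi2, if_neg (by omega : ¬ i + 1 < n)]
          have h1 : i + 1 - n = (i - n) + 1 := by omega
          rw [h1]
          exact htail (i - n)
    exact (h ε hε).1 σ (hσ0 ▸ hInit) hσstep
  · rintro ⟨hsc, hterm⟩ ε hε
    refine ⟨hterm ε hε, ?_⟩
    intro s hs hng
    obtain ⟨t, hst, hgt⟩ := hsc ε hε s hs
    rcases Relation.ReflTransGen.cases_head hst with heq | ⟨u, hsu, _⟩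
    · exact absurd (heq ▸ hgt) hng
    · exact ⟨u, hsu.1⟩
end

section
/- In the FOND translation T(Q) with a bounded stack and counters, any infinite trajectory of a strong cyclic policy is terminating: among the recurrent states there is a variable X held at a fixed stack depth d throughout all recurrent states, such that X is decremented at some recurrent state (via an a(X,d) action) and incremented at no recurrent state (increments of X are disabled while X is on the stack). -/
/-!
Along a trajectory the stack holds distinct variables and all counters stay bounded by `Max`, so the
trajectory visits finitely many states and, from some time `N` on, only recurrent ones. As the
policy is strong cyclic but the trajectory avoids the goal, actions `a(X,d)` keep occurring:
outside them `T(Q)` is deterministic, so the goal would have to lie on the trajectory itself.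
Let `d` be the least depth of such an action after `N`. Then no counter below depth `d` is reset
by an action after `N`, and by induction on the depth a push below `d` would increase a counter
that never decreases afterwards, contradicting recurrence.
Hence the stack never shrinks below `d` again, its `d`-th entry `X` stays fixed, and while `X` is
on the stack no action may increment it.
-/

/-- A state of the FOND translation `T(Q)`: a boolean state `b`, the top counter `cT`,
the counters `c d` for each stack depth `d`, and the stack `α` of (distinct) numerical
variables, listed from the bottom (depth 1) up. -/
structure TState (B Var : Type*) where
  b : B
  cT : ℕ
  c : ℕ → ℕ
  α : List Var

/-- Action labels of `T(Q)`: `push X d` / `pop X d` manipulate the stack at depth `d`,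
`move` advances the top counter, `act a X d` is the action `a(X,d)` of `T(Q)` for a
QNP action `a` decrementing the variable `X` stacked at depth `d`, and `actD a` is the
deterministic version of a QNP action `a` that decrements no variable. -/
inductive TLab (Act0 Var : Type*) where
  | push (X : Var) (d : ℕ)
  | pop (X : Var) (d : ℕ)
  | move
  | act (a : Act0) (X : Var) (d : ℕ)
  | actD (a : Act0)

/-- Variable `X` sits at depth `d` of the stack `α` (depth 1 is the bottom). -/
def atDepth {Var : Type*} (α : List Var) (X : Var) (d : ℕ) : Prop :=
  1 ≤ d ∧ α[d - 1]? = some X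

/-- The label `l` increments the variable `X` (only `act`/`actD` labels do). -/
def incLab {Act0 Var : Type*} (inc : Act0 → Finset Var) :
    TLab Act0 Var → Var → Prop
  | .act a _ _, X => X ∈ inc a
  | .actD a, X => X ∈ inc a
  | _, _ => False

/-- The transition relation of `T(Q)`. `dec a`/`inc a` are the variables decremented /
incremented by the QNP action `a`; `RelN a` is the (non-deterministic) effect on boolean
states of an action `a` that decrements variables, `effD a` the (deterministic) effect
of an action that decrements none; `Max` bounds the counters.
* `push X d`: requires `X ∉ α`, `|α| = d` and `c d < Max`; pushes `X`, increments `c d`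
  and resets `c (d+1)` to `0`.
* `pop X d`: pops the top variable `X` at depth `d = |α|`.
* `move`: requires an empty stack and `cT < Max`; increments `cT`.
* `act a X d`: requires `X ∈ dec a` on the stack at depth `d`, and every variable
  incremented by `a` not on the stack; resets `c d'` for all `d' ≥ d`.
* `actD a`: requires `dec a = ∅` and every incremented variable not on the stack. -/
inductive TStep {B Act0 Var : Type*} (dec inc : Act0 → Finset Var)
    (RelN : Act0 → B → B → Prop) (effD : Act0 → B → B) (Max : ℕ) :
    TState B Var → TLab Act0 Var → TState B Var → Prop
  | push (s : TState B Var) (X : Var) (hX : X ∉ s.α) (hc : s.c s.α.length < Max) :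
      TStep dec inc RelN effD Max s (.push X s.α.length)
        ⟨s.b, s.cT,
          fun d' => if d' = s.α.length then s.c d' + 1
                    else if d' = s.α.length + 1 then 0 else s.c d',
          s.α ++ [X]⟩
  | pop (s : TState B Var) (X : Var) (h : atDepth s.α X s.α.length) :
      TStep dec inc RelN effD Max s (.pop X s.α.length)
        ⟨s.b, s.cT, s.c, s.α.dropLast⟩
  | move (s : TState B Var) (hα : s.α = []) (hc : s.cT < Max) :
      TStep dec inc RelN effD Max s .move ⟨s.b, s.cT + 1, s.c, s.α⟩
  | act (s : TState B Var) (a : Act0) (X : Var) (d : ℕ)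
      (hXd : atDepth s.α X d) (hdec : X ∈ dec a)
      (hinc : ∀ Y ∈ inc a, Y ∉ s.α) (b' : B) (hb : RelN a s.b b') :
      TStep dec inc RelN effD Max s (.act a X d)
        ⟨b', s.cT, fun d' => if d ≤ d' then 0 else s.c d', s.α⟩
  | actD (s : TState B Var) (a : Act0) (hdec : dec a = ∅)
      (hinc : ∀ Y ∈ inc a, Y ∉ s.α) :
      TStep dec inc RelN effD Max s (.actD a) ⟨effD a s.b, s.cT, s.c, s.α⟩

/-- One step of the execution of policy `π` in `T(Q)`. -/
def TpiStep {B Act0 Var : Type*} (dec inc : Act0 → Finset Var)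
    (RelN : Act0 → B → B → Prop) (effD : Act0 → B → B) (Max : ℕ)
    (π : TState B Var → Option (TLab Act0 Var)) (s s' : TState B Var) : Prop :=
  ∃ l, π s = some l ∧ TStep dec inc RelN effD Max s l s'

theorem atDepth.le_length {Var : Type*} {α : List Var} {X : Var} {d : ℕ}
    (h : atDepth α X d) : d ≤ α.length := by
  have := (List.getElem?_eq_some_iff.mp h.2).1
  have := h.1
  omega

open Set Relation

namespace TStep

variable {B Act0 Var : Type*} {dec inc : Act0 → Finset Var}
  {RelN : Act0 → B → B → Prop} {effD : Act0 → B → B} {Max : ℕ}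
  {s s' : TState B Var} {l : TLab Act0 Var}

theorem eq_of_forall_ne_act {s'' : TState B Var} (hl : ∀ a X d, l ≠ .act a X d)
    (h : TStep dec inc RelN effD Max s l s') (h' : TStep dec inc RelN effD Max s l s'') :
    s' = s'' := by
  cases h <;> cases h' <;> first | rfl | exact absurd rfl (hl _ _ _)

theorem atDepth_of_act {a : Act0} {X : Var} {d : ℕ}
    (h : TStep dec inc RelN effD Max s (.act a X d) s') : atDepth s.α X d := by
  cases h with
  | act _ _ _ hXd => exact hXd

theorem not_mem_of_incLab {X : Var} (h : TStep dec inc RelN effD Max s l s')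
    (hX : incLab inc l X) : X ∉ s.α := by
  cases h with
  | act _ _ _ _ _ hinc => exact hinc X hX
  | actD _ _ hinc => exact hinc X hX
  | _ => exact hX.elim

theorem c_push {X : Var} {e : ℕ} (h : TStep dec inc RelN effD Max s (.push X e) s') :
    s'.c e = s.c e + 1 := by
  cases h
  simp

theorem c_le_c_of_not_reset {e : ℕ} (h : TStep dec inc RelN effD Max s l s')
    (hact : ∀ a X d, l = .act a X d → e < d)
    (hpush : ∀ X e', l = .push X e' → e' + 1 ≠ e) :
    s.c e ≤ s'.c e := by
  cases h with
  | push X =>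
    have := hpush X _ rfl
    dsimp only
    split_ifs <;> omega
  | act a X d =>
    have := hact a X d rfl
    simp only [if_neg (show ¬d ≤ e by omega), le_refl]
  | _ => exact le_rfl

theorem length_lt {d : ℕ} (h : TStep dec inc RelN effD Max s l s')
    (hpush : ∀ X e, l = .push X e → d ≤ e) (hlen : s.α.length < d) : s'.α.length < d := by
  cases h with
  | push X => exact absurd (hpush X _ rfl) (not_le.mpr hlen)
  | pop => simp only [List.length_dropLast]; omega
  | _ => exact hlen

theorem atDepth_of_le_length {X : Var} {d : ℕ} (h : TStep dec inc RelN effD Max s l s')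
    (hX : atDepth s.α X d) (hd : d ≤ s'.α.length) : atDepth s'.α X d := by
  obtain ⟨hd1, hXd⟩ := hX
  refine ⟨hd1, ?_⟩
  cases h with
  | push => rwa [List.getElem?_append_left (List.getElem?_eq_some_iff.mp hXd).1]
  | pop =>
    simp only [List.length_dropLast] at hd
    rwa [List.dropLast_eq_take, List.getElem?_take_of_lt (by omega)]
  | _ => exact hXd

end TStep

/-- Pushes only happen below depth `Nat.card Var`, since the stack holds distinct variables;
hence the counters above it never leave `0`. -/
def boundedStates (B Var : Type*) (Max : ℕ) : Set (TState B Var) :=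
  {s | s.α.Nodup ∧ s.cT ≤ Max ∧ ∀ e, s.c e ≤ Max ∧ (Nat.card Var < e → s.c e = 0)}

theorem TStep.mem_boundedStates {B Act0 Var : Type*} [Finite Var]
    {dec inc : Act0 → Finset Var} {RelN : Act0 → B → B → Prop} {effD : Act0 → B → B} {Max : ℕ}
    {s s' : TState B Var} {l : TLab Act0 Var} (h : TStep dec inc RelN effD Max s l s')
    (hs : s ∈ boundedStates B Var Max) : s' ∈ boundedStates B Var Max := by
  obtain ⟨hnd, hT, hc⟩ := hs
  cases h with
  | push X hX hlt =>
    have hnd' : (s.α ++ [X]).Nodup := List.nodup_append.mpr ⟨hnd, List.nodup_singleton X,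
      fun a ha b hb hab => hX (by rw [List.mem_singleton.mp hb] at hab; exact hab ▸ ha)⟩
    have hlen := hnd'.length_le_natCard
    simp only [List.length_append, List.length_singleton] at hlen
    refine ⟨hnd', hT, fun e => ?_⟩
    dsimp only
    have := hc e
    split_ifs with he <;> (try subst he) <;> omega
  | pop => exact ⟨hnd.sublist (List.dropLast_sublist _), hT, hc⟩
  | move => exact ⟨hnd, by dsimp only; omega, hc⟩
  | act =>
    refine ⟨hnd, hT, fun e => ?_⟩
    dsimp only
    split_ifs
    · omega
    · exact hc e
  | actD => exact ⟨hnd, hT, hc⟩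

theorem finite_boundedStates (B Var : Type*) [Finite B] [Finite Var] (Max : ℕ) :
    (boundedStates B Var Max).Finite := by
  set K := Nat.card Var
  let f (s : TState B Var) : B × ℕ × (Fin (K + 1) → ℕ) × (Fin K → Option Var) :=
    (s.b, s.cT, fun e => s.c e, fun j => s.α[(j : ℕ)]?)
  refine Set.Finite.of_injOn (f := f)
    (t := univ ×ˢ Iic Max ×ˢ pi univ (fun _ => Iic Max) ×ˢ univ) ?_ ?_
    (finite_univ.prod ((finite_Iic Max).prod ((Set.Finite.pi fun _ => finite_Iic Max).prod
      finite_univ)))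
  · rintro s ⟨-, hT, hc⟩
    exact ⟨trivial, hT, fun e _ => (hc e).1, trivial⟩
  · rintro ⟨b₁, t₁, c₁, α₁⟩ ⟨hnd₁, -, hc₁⟩ ⟨b₂, t₂, c₂, α₂⟩ ⟨hnd₂, -, hc₂⟩ hf
    simp only [f, Prod.mk.injEq] at hf
    dsimp only at hnd₁ hc₁ hnd₂ hc₂
    obtain ⟨rfl, rfl, hc, hα⟩ := hf
    have hc : c₁ = c₂ := funext fun e => by
      by_cases he : e ≤ K
      · exact congrFun hc ⟨e, by omega⟩
      · rw [(hc₁ e).2 (by omega), (hc₂ e).2 (by omega)]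
    have hα : α₁ = α₂ := List.ext_getElem? fun n => by
      by_cases hn : n < K
      · exact congrFun hα ⟨n, hn⟩
      · have h₁ := hnd₁.length_le_natCard
        have h₂ := hnd₂.length_le_natCard
        rw [List.getElem?_eq_none (by omega), List.getElem?_eq_none (by omega)]
    rw [hc, hα]

section Recurrence

variable {α : Type*} {f : ℕ → α}

theorem exists_forall_ge_infinite_fiber (hf : (range f).Finite) :
    ∃ N, ∀ i ≥ N, {j | f j = f i}.Infinite := by
  have hfin : {i | {j | f j = f i}.Finite}.Finite := by
    refine ((hf.subset inter_subset_left).biUnion' (t := fun x _ => f ⁻¹' {x})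
      fun x hx => hx.2).subset ?_
    intro i hi
    exact mem_biUnion (x := f i) ⟨mem_range_self i, hi⟩ rfl
  obtain ⟨N, hN⟩ := hfin.bddAbove
  exact ⟨N + 1, fun i hi hfi => absurd (hN hfi) (by omega)⟩

theorem Relation.ReflTransGen.exists_eq_of_deterministic {r : α → α → Prop} {N : ℕ} {t : α}
    (hr : ∀ i ≥ N, ∀ t, r (f i) t → t = f (i + 1)) (h : ReflTransGen r (f N) t) :
    ∃ j ≥ N, f j = t := by
  induction h with
  | refl => exact ⟨N, le_rfl, rfl⟩
  | tail _ hst ih =>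
    obtain ⟨j, hj, rfl⟩ := ih
    exact ⟨j + 1, by omega, (hr j hj _ hst).symm⟩

variable {N : ℕ} (hrec : ∀ i ≥ N, {j | f j = f i}.Infinite)
include hrec

theorem forall_ge_of_recurrent {P : α → Prop} (hP : ∀ k ≥ N, P (f k) → P (f (k + 1)))
    {i j : ℕ} (hi : N ≤ i) (h : P (f i)) (hj : N ≤ j) : P (f j) := by
  have hge : ∀ k ≥ i, P (f k) := fun k hk => by
    induction k, hk using Nat.le_induction with
    | base => exact h
    | succ k hik ih => exact hP k (hi.trans hik) ih
  obtain ⟨k, hk, hik⟩ := (hrec j hj).exists_gt i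
  exact hk ▸ hge k hik.le

theorem le_of_recurrent {β : Type*} [Preorder β] {φ : α → β}
    (hmono : ∀ k ≥ N, φ (f k) ≤ φ (f (k + 1))) {i : ℕ} (hi : N ≤ i) :
    φ (f (i + 1)) ≤ φ (f i) :=
  forall_ge_of_recurrent hrec (P := fun x => φ (f (i + 1)) ≤ φ x)
    (fun k hk h => h.trans (hmono k hk)) (by omega) le_rfl hi

end Recurrence

section Trajectory

variable {B Act0 Var : Type*} {dec inc : Act0 → Finset Var}
  {RelN : Act0 → B → B → Prop} {effD : Act0 → B → B} {Max : ℕ}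
  {σ : ℕ → TState B Var} {lab : ℕ → TLab Act0 Var}

theorem range_subset_boundedStates [Finite Var]
    (hinit : (σ 0).α = [] ∧ (σ 0).cT = 0 ∧ ∀ d, (σ 0).c d = 0)
    (hstep : ∀ i, TStep dec inc RelN effD Max (σ i) (lab i) (σ (i + 1))) :
    range σ ⊆ boundedStates B Var Max := by
  rintro _ ⟨i, rfl⟩
  induction i with
  | zero =>
    obtain ⟨hα, hT, hc⟩ := hinit
    exact ⟨hα ▸ List.nodup_nil, by omega, fun e => by simp [hc e]⟩
  | succ i ih => exact (hstep i).mem_boundedStates ih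

theorem exists_ge_lab_eq_act {Gset : B → Prop} {π : TState B Var → Option (TLab Act0 Var)}
    (hπ : ∀ i, π (σ i) = some (lab i))
    (hstep : ∀ i, TStep dec inc RelN effD Max (σ i) (lab i) (σ (i + 1)))
    (hsc : ∀ s, ReflTransGen (TpiStep dec inc RelN effD Max π) (σ 0) s →
      ∃ t, ReflTransGen (TpiStep dec inc RelN effD Max π) s t ∧ Gset t.b)
    (hng : ∀ i, ¬ Gset (σ i).b) (N : ℕ) :
    ∃ d, ∃ i ≥ N, ∃ a X, lab i = .act a X d := by
  by_contra! hN
  have hdet : ∀ i ≥ N, ∀ t, TpiStep dec inc RelN effD Max π (σ i) t → t = σ (i + 1) := by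
    rintro i hi t ⟨l, hl, ht⟩
    rw [hπ i, Option.some_inj] at hl
    subst hl
    exact (hstep i).eq_of_forall_ne_act (fun a X d => hN d i hi a X) ht |>.symm
  have hreach : ReflTransGen (TpiStep dec inc RelN effD Max π) (σ 0) (σ N) :=
    (reflTransGen_of_succ_of_le (fun i j => TpiStep dec inc RelN effD Max π (σ i) (σ j))
      (fun i _ => ⟨lab i, hπ i, hstep i⟩) (Nat.zero_le N)).lift σ fun _ _ h => h
  obtain ⟨t, ht, hgoal⟩ := hsc _ hreach
  obtain ⟨j, -, rfl⟩ := ht.exists_eq_of_deterministic hdet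
  exact hng j hgoal

variable (hstep : ∀ i, TStep dec inc RelN effD Max (σ i) (lab i) (σ (i + 1)))
  {N : ℕ} (hrec : ∀ i ≥ N, {j | σ j = σ i}.Infinite)
  {d : ℕ} (hdmin : ∀ i ≥ N, ∀ a X e, lab i = .act a X e → d ≤ e)
include hstep hrec hdmin

theorem le_of_lab_eq_push {i : ℕ} (hi : N ≤ i) {X : Var} {e : ℕ} (hlab : lab i = .push X e) :
    d ≤ e := by
  induction e using Nat.strong_induction_on generalizing i X with
  | _ e ih =>
  by_contra! he
  have hmono : ∀ k ≥ N, (σ k).c e ≤ (σ (k + 1)).c e := fun k hk =>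
    (hstep k).c_le_c_of_not_reset (fun a Y e' h => by have := hdmin k hk a Y e' h; omega)
      (fun Y e' h he' => by have := ih e' (by omega) hk h; omega)
  have hle := le_of_recurrent hrec (φ := fun s => s.c e) hmono hi
  have hsucc := (hlab ▸ hstep i).c_push
  omega

theorem le_length_of_recurrent {i₀ : ℕ} (hi₀ : N ≤ i₀) (hlen : d ≤ (σ i₀).α.length)
    {j : ℕ} (hj : N ≤ j) : d ≤ (σ j).α.length := by
  by_contra! h
  have := forall_ge_of_recurrent hrec (P := fun s => s.α.length < d)
    (fun k hk => (hstep k).length_lt fun _ _ => le_of_lab_eq_push hstep hrec hdmin hk) hj h hi₀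
  omega

theorem atDepth_of_recurrent {i₀ : ℕ} (hi₀ : N ≤ i₀) {X : Var} (hX : atDepth (σ i₀).α X d)
    {j : ℕ} (hj : N ≤ j) : atDepth (σ j).α X d :=
  forall_ge_of_recurrent hrec (P := fun s => atDepth s.α X d)
    (fun k hk h => (hstep k).atDepth_of_le_length h
      (le_length_of_recurrent hstep hrec hdmin hi₀ hX.le_length (by omega)))
    hi₀ hX hj

end Trajectory

theorem stmt18_general {B Act0 Var : Type*} [Finite B] [Finite Var]
    (dec inc : Act0 → Finset Var)
    (RelN : Act0 → B → B → Prop) (effD : Act0 → B → B) (Max : ℕ)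
    (Gset : B → Prop) (π : TState B Var → Option (TLab Act0 Var))
    (σ : ℕ → TState B Var)
    -- the initial state has empty stack and zero counters
    (hinit : (σ 0).α = [] ∧ (σ 0).cT = 0 ∧ ∀ d, (σ 0).c d = 0)
    -- π is a strong cyclic solution w.r.t. the initial state σ 0 and the goal Gset
    (hsc : ∀ s, Relation.ReflTransGen (TpiStep dec inc RelN effD Max π) (σ 0) s →
      ∃ t, Relation.ReflTransGen (TpiStep dec inc RelN effD Max π) s t ∧ Gset t.b)
    -- σ is an infinite π-trajectory
    (hstep : ∀ i, ∃ l, π (σ i) = some l ∧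
      TStep dec inc RelN effD Max (σ i) l (σ (i + 1)))
    -- avoiding goal states
    (hng : ∀ i, ¬ Gset (σ i).b) :
    ∃ (X : Var) (d : ℕ),
      (∀ s : TState B Var, {i | σ i = s}.Infinite → atDepth s.α X d) ∧
      (∃ s : TState B Var, {i | σ i = s}.Infinite ∧
        ∃ a, π s = some (.act a X d)) ∧
      (∀ s : TState B Var, {i | σ i = s}.Infinite →
        ∀ l, π s = some l → ¬ incLab inc l X) := by
  classical
  choose lab hπ hstep using hstep
  obtain ⟨N, hrec⟩ := exists_forall_ge_infinite_fiber
    ((finite_boundedStates B Var Max).subset (range_subset_boundedStates hinit hstep))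
  have hd := exists_ge_lab_eq_act hπ hstep hsc hng N
  obtain ⟨i₀, hi₀, a, X, hlab⟩ := Nat.find_spec hd
  have hdmin : ∀ i ≥ N, ∀ a X e, lab i = .act a X e → Nat.find hd ≤ e :=
    fun i hi a X e h => Nat.find_min' hd ⟨i, hi, a, X, h⟩
  have hX : ∀ j ≥ N, atDepth (σ j).α X (Nat.find hd) := fun j hj =>
    atDepth_of_recurrent hstep hrec hdmin hi₀ (hlab ▸ hstep i₀).atDepth_of_act hj
  refine ⟨X, Nat.find hd, fun s hs => ?_, ⟨σ i₀, hrec i₀ hi₀, a, hlab ▸ hπ i₀⟩,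
    fun s hs l hl hinc => ?_⟩
  · obtain ⟨j, rfl, hj⟩ := hs.exists_gt N
    exact hX j hj.le
  · obtain ⟨j, rfl, hj⟩ := hs.exists_gt N
    rw [hπ j, Option.some_inj] at hl
    subst hl
    exact (hstep j).not_mem_of_incLab hinc (List.mem_of_getElem? (hX j hj.le).2)

/-- in the FOND translation `T(Q)`, any infinite (goal-avoiding)
trajectory of a strong cyclic policy is terminating: there are a variable `X` and a
depth `d` such that `X` sits at depth `d` of the stack in all recurrent states, `X` is
decremented at some recurrent state via an `a(X,d)` action, and no recurrent state
applies an action incrementing `X`. -/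
theorem stmt18 {B Act0 Var : Type*} [Finite B] [Finite Var] [Finite Act0]
    (dec inc : Act0 → Finset Var)
    (RelN : Act0 → B → B → Prop) (effD : Act0 → B → B) (Max : ℕ)
    (Gset : B → Prop) (π : TState B Var → Option (TLab Act0 Var))
    (σ : ℕ → TState B Var)
    -- the initial state has empty stack and zero counters
    (hinit : (σ 0).α = [] ∧ (σ 0).cT = 0 ∧ ∀ d, (σ 0).c d = 0)
    -- π is a strong cyclic solution w.r.t. the initial state σ 0 and the goal Gset
    (hsc : ∀ s, Relation.ReflTransGen (TpiStep dec inc RelN effD Max π) (σ 0) s →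
      ∃ t, Relation.ReflTransGen (TpiStep dec inc RelN effD Max π) s t ∧ Gset t.b)
    -- σ is an infinite π-trajectory
    (hstep : ∀ i, ∃ l, π (σ i) = some l ∧
      TStep dec inc RelN effD Max (σ i) l (σ (i + 1)))
    -- avoiding goal states
    (hng : ∀ i, ¬ Gset (σ i).b) :
    ∃ (X : Var) (d : ℕ),
      (∀ s : TState B Var, {i | σ i = s}.Infinite → atDepth s.α X d) ∧
      (∃ s : TState B Var, {i | σ i = s}.Infinite ∧
        ∃ a, π s = some (.act a X d)) ∧
      (∀ s : TState B Var, {i | σ i = s}.Infinite →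
        ∀ l, π s = some l → ¬ incLab inc l X) :=
  stmt18_general dec inc RelN effD Max Gset π σ hinit hsc hstep hng
end
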